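/- arXiv:2306.00802 — 4 statements merged into one kernel-verified Lean document; each statement's English description precedes it below -/
import Mathlib

section
/- Suppose (u_i)_{i∈[N]} and (v_j)_{j∈[N]} are families in ℝ^d that are ε-nearly orthonormal: |u_i^⊤ u_{i'} - 1{i=i'}| ≤ ε and |v_j^⊤ v_{j'} - 1{j=j'}| ≤ ε. Let W = ∑_{i∈[N]} v_{π(i)} u_i^⊤ for a function π: [N] → [N]. If ε < 1/(4N), then for every i and every j ≠ π(i), v_{π(i)}^⊤ W u_i > v_j^⊤ W u_i, so argmax_j v_j^⊤ W u_i = π(i). -/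
open Finset

/-- Euclidean inner product on `ℝ^d`. -/
noncomputable def dot {d : ℕ} (u v : Fin d → ℝ) : ℝ := ∑ a, u a * v a

theorem key_lem {N d : ℕ} (u v : Fin N → Fin d → ℝ) (π : Fin N → Fin N)
    (W : Fin d → Fin d → ℝ)
    (hW : ∀ a b, W a b = ∑ i, v (π i) a * u i b) (i : Fin N) (w : Fin d → ℝ) :
    dot w (fun a => ∑ b, W a b * u i b)
      = ∑ k, dot w (v (π k)) * dot (u k) (u i) := by
  simp only [dot, hW, Finset.sum_mul, Finset.mul_sum]
  conv_lhs => rw [Finset.sum_congr rfl fun a _ => Finset.sum_comm]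
  rw [Finset.sum_comm]
  refine Finset.sum_congr rfl fun k _ => ?_
  rw [Finset.sum_comm]
  exact Finset.sum_congr rfl fun a _ => Finset.sum_congr rfl fun b _ => by ring

/-- for `ε`-nearly orthonormal families `(u_i)` and `(v_j)` and the memory
`W = ∑_i v_{π(i)} u_i^⊤`, if `ε < 1/(4N)` then for every `i` and every `j ≠ π(i)` we
have `v_{π(i)}^⊤ W u_i > v_j^⊤ W u_i`: the memory retrieves the correct association. -/
theorem assoc_memory_near_orthonormal_recall {N d : ℕ}
    (u v : Fin N → Fin d → ℝ) (ε : ℝ) (hε0 : 0 ≤ ε)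
    (hu : ∀ i i', |dot (u i) (u i') - if i = i' then 1 else 0| ≤ ε)
    (hv : ∀ j j', |dot (v j) (v j') - if j = j' then 1 else 0| ≤ ε)
    (π : Fin N → Fin N)
    (W : Fin d → Fin d → ℝ)
    (hW : ∀ a b, W a b = ∑ i, v (π i) a * u i b)
    (hεN : ε < 1 / (4 * N)) :
    ∀ i j, j ≠ π i →
      dot (v j) (fun a => ∑ b, W a b * u i b) <
      dot (v (π i)) (fun a => ∑ b, W a b * u i b) := by
  intro i j hj
  rw [key_lem u v π W hW i, key_lem u v π W hW i]
  rw [← sub_pos, ← Finset.sum_sub_distrib]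
  have hgform : ∀ k, dot (v (π i)) (v (π k)) * dot (u k) (u i)
      - dot (v j) (v (π k)) * dot (u k) (u i)
      = (dot (v (π i)) (v (π k)) - dot (v j) (v (π k))) * dot (u k) (u i) :=
    fun k => by ring
  simp only [hgform]
  set g : Fin N → ℝ := fun k =>
    (dot (v (π i)) (v (π k)) - dot (v j) (v (π k))) * dot (u k) (u i) with hg
  -- basic numeric facts
  have hN1 : (1 : ℝ) ≤ (N : ℝ) := by
    have := i.pos
    exact_mod_cast this
  have hNpos : (0 : ℝ) < (N : ℝ) := by linarith
  have hNε : (N : ℝ) * ε < 1 / 4 := by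
    have h4 : (0:ℝ) < 4 * N := by positivity
    rw [lt_div_iff₀ h4] at hεN
    nlinarith
  have hε14 : ε < 1 / 4 := by nlinarith
  -- bound on g i
  have hgi : (1 - 2 * ε) * (1 - ε) ≤ g i := by
    have h1 := abs_le.mp (hv (π i) (π i))
    have h2 := abs_le.mp (hv j (π i))
    have h3 := abs_le.mp (hu i i)
    simp only [if_pos rfl, if_true] at h1 h3
    rw [if_neg hj] at h2
    have hA : 1 - 2 * ε ≤ dot (v (π i)) (v (π i)) - dot (v j) (v (π i)) := by
      linarith [h1.1, h2.2]
    have hc : 1 - ε ≤ dot (u i) (u i) := by linarith [h3.1]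
    have h12 : 0 ≤ 1 - 2 * ε := by linarith
    have h1e : 0 ≤ 1 - ε := by linarith
    calc (1 - 2 * ε) * (1 - ε) ≤ (dot (v (π i)) (v (π i)) - dot (v j) (v (π i)))
          * (1 - ε) := by nlinarith
      _ ≤ (dot (v (π i)) (v (π i)) - dot (v j) (v (π i))) * dot (u i) (u i) := by
          nlinarith
      _ = g i := rfl
  -- bound on other terms
  have hgk : ∀ k ∈ Finset.univ.erase i, -((1 + 2 * ε) * ε) ≤ g k := by
    intro k hk
    have hki : k ≠ i := Finset.ne_of_mem_erase hk
    have h1 := abs_le.mp (hv (π i) (π k))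
    have h2 := abs_le.mp (hv j (π k))
    have h3 := abs_le.mp (hu k i)
    rw [if_neg hki] at h3
    have hc : |dot (u k) (u i)| ≤ ε := abs_le.mpr ⟨by linarith [h3.1], by linarith [h3.2]⟩
    have hA : |dot (v (π i)) (v (π k)) - dot (v j) (v (π k))| ≤ 1 + 2 * ε := by
      rcases eq_or_ne (π i) (π k) with he | he
      · rw [if_pos he] at h1
        rw [if_neg (he ▸ hj)] at h2
        exact abs_le.mpr ⟨by linarith [h1.1, h2.2], by linarith [h1.2, h2.1]⟩
      · rw [if_neg he] at h1
        by_cases he2 : j = π k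
        · rw [if_pos he2] at h2
          exact abs_le.mpr ⟨by linarith [h1.1, h2.2], by linarith [h1.2, h2.1]⟩
        · rw [if_neg he2] at h2
          exact abs_le.mpr ⟨by linarith [h1.1, h2.2], by linarith [h1.2, h2.1]⟩
    have habs : |g k| ≤ (1 + 2 * ε) * ε := by
      rw [hg]
      simp only []
      rw [abs_mul]
      exact mul_le_mul hA hc (abs_nonneg _) (by linarith)
    linarith [abs_le.mp habs |>.1]
  -- combine
  have hsplit : ∑ k, g k = g i + ∑ k ∈ Finset.univ.erase i, g k :=
    (Finset.add_sum_erase _ g (Finset.mem_univ i)).symm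
  have hcard : ((Finset.univ.erase i).card : ℝ) = (N : ℝ) - 1 := by
    rw [Finset.card_erase_of_mem (Finset.mem_univ i), Finset.card_univ, Fintype.card_fin]
    have := i.pos
    push_cast [Nat.cast_sub this]
    ring
  have hsum : -(((N : ℝ) - 1) * ((1 + 2 * ε) * ε)) ≤ ∑ k ∈ Finset.univ.erase i, g k := by
    have := Finset.card_nsmul_le_sum (Finset.univ.erase i) g (-((1 + 2 * ε) * ε))
      (fun k hk => hgk k hk)
    rw [nsmul_eq_mul] at this
    rw [hcard] at this
    linarith
  rw [hsplit]
  have key1 : (N : ℝ) * ε * ε ≤ (1/4) * ε := by nlinarith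
  have key2 : ε ≤ (N : ℝ) * ε := by nlinarith
  nlinarith [sq_nonneg ε, mul_nonneg hε0 hε0]
end

section
/- For the attention loss L(W) = E[ℓ(y, W_U Φ₂ X σ(X^⊤ W x_T))], the gradient at W = 0 equals ∇_W L(0) = ∑_{k=1}^N E[(p̂(k|X) - 1{y=k}) · (1/T) ∑_{t=1}^T w_U(k)^⊤ Φ₂ x_t · (x_t - x̄_{1:T}) x_T^⊤], where x̄_{1:T} = (1/T)∑_t x_t and p̂(k|X) = σ(W_U Φ₂ X σ(X^⊤·0·x_T))_k is evaluated with uniform attention weights. -/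
open Finset

noncomputable def softmax {n : ℕ} (u : Fin n → ℝ) (t : Fin n) : ℝ :=
  Real.exp (u t) / ∑ s, Real.exp (u s)

noncomputable def crossEntropy {N : ℕ} (y : Fin N) (ξ : Fin N → ℝ) : ℝ :=
  - Real.log (softmax ξ y)

/-- Update the `(a,b)` entry of a matrix to the value `s`. -/
def updEntry {d e : ℕ} (W : Fin d → Fin e → ℝ) (a : Fin d) (b : Fin e) (s : ℝ) :
    Fin d → Fin e → ℝ :=
  Function.update W a (Function.update (W a) b s)

/-! Along the line `W = s • E_{ab}` the attention scores are `s * c_t` with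
`c_t = x_t(a) * x_T(b)`. At `s = 0` the attention is uniform, and by the softmax Jacobian the
weights move with velocity `(c_t - c̄) / T`. The cross-entropy has gradient `softmax ξ - e_y` in
the logits, so the chain rule and linearity of the expectation give the formula. -/

lemma sum_exp_pos {n : ℕ} (u : Fin n → ℝ) (t : Fin n) : 0 < ∑ s, Real.exp (u s) :=
  sum_pos (fun s _ => Real.exp_pos (u s)) ⟨t, mem_univ t⟩

lemma softmax_const {n : ℕ} (a : ℝ) (t : Fin n) : softmax (fun _ => a) t = 1 / n := by
  have hn : (n : ℝ) ≠ 0 := Nat.cast_ne_zero.mpr (Fin.pos t).ne'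
  simp only [softmax, sum_const, card_univ, Fintype.card_fin, nsmul_eq_mul]
  field_simp

lemma HasDerivAt.softmax {n : ℕ} {u : ℝ → Fin n → ℝ} {u' : Fin n → ℝ} {x : ℝ}
    (hu : ∀ t, HasDerivAt (fun s => u s t) (u' t) x) (t : Fin n) :
    HasDerivAt (fun s => softmax (u s) t)
      (softmax (u x) t * (u' t - ∑ t', softmax (u x) t' * u' t')) x := by
  have hS := sum_exp_pos (u x) t
  have hden : HasDerivAt (fun s => ∑ t', Real.exp (u s t'))
      (∑ t', Real.exp (u x t') * u' t') x :=
    HasDerivAt.fun_sum fun t' _ => (hu t').exp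
  refine ((hu t).exp.fun_div hden hS.ne').congr_deriv ?_
  simp only [_root_.softmax, div_mul_eq_mul_div, ← sum_div]
  field_simp

lemma crossEntropy_eq_log_sum_exp_sub {N : ℕ} (y : Fin N) (v : Fin N → ℝ) :
    crossEntropy y v = Real.log (∑ k, Real.exp (v k)) - v y := by
  rw [crossEntropy, softmax, Real.log_div (Real.exp_ne_zero _) (sum_exp_pos v y).ne',
    Real.log_exp]
  ring

lemma HasDerivAt.crossEntropy {N : ℕ} {v : ℝ → Fin N → ℝ} {v' : Fin N → ℝ} {x : ℝ}
    (hv : ∀ k, HasDerivAt (fun s => v s k) (v' k) x) (y : Fin N) :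
    HasDerivAt (fun s => _root_.crossEntropy y (v s))
      (∑ k, (_root_.softmax (v x) k - if y = k then 1 else 0) * v' k) x := by
  have hS := sum_exp_pos (v x) y
  have hlog : HasDerivAt (fun s => Real.log (∑ k, Real.exp (v s k)))
      ((∑ k, Real.exp (v x k) * v' k) / ∑ k, Real.exp (v x k)) x :=
    (HasDerivAt.fun_sum fun k _ => (hv k).exp).log hS.ne'
  simp only [crossEntropy_eq_log_sum_exp_sub]
  refine (hlog.fun_sub (hv y)).congr_deriv ?_
  simp only [sub_mul, sum_sub_distrib, ite_mul, one_mul, zero_mul, sum_ite_eq, mem_univ,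
    if_true, _root_.softmax, sum_div]
  congr 1
  exact sum_congr rfl fun k _ => by ring

lemma softmax_zero_mul {T : ℕ} (c : Fin T → ℝ) (t : Fin T) :
    softmax (fun t' => 0 * c t') t = 1 / T := by
  simpa only [zero_mul] using softmax_const 0 t

lemma sum_mul_softmax_zero_mul {T : ℕ} (A c : Fin T → ℝ) :
    ∑ t, A t * softmax (fun t' => 0 * c t') t = 1 / T * ∑ t, A t := by
  simp only [softmax_zero_mul]
  rw [← sum_mul, mul_comm]

lemma hasDerivAt_sum_mul_softmax_mul {T : ℕ} (A c : Fin T → ℝ) :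
    HasDerivAt (fun s => ∑ t, A t * softmax (fun t' => s * c t') t)
      (1 / T * ∑ t, A t * (c t - 1 / T * ∑ t', c t')) 0 := by
  refine (HasDerivAt.fun_sum fun t _ =>
    ((HasDerivAt.softmax (fun t' => hasDerivAt_mul_const (c t')) t).const_mul (A t))).congr_deriv ?_
  simp only [softmax_zero_mul, mul_sum]
  exact sum_congr rfl fun t _ => by ring

lemma sum_mul_sum_updEntry_zero {d e : ℕ} (x : Fin d → ℝ) (z : Fin e → ℝ) (a : Fin d) (b : Fin e)
    (s : ℝ) : ∑ i, x i * ∑ j, updEntry 0 a b s i j * z j = s * (x a * z b) := by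
  have hentry : ∀ i j, updEntry 0 a b s i j = if i = a then if j = b then s else 0 else 0 := by
    intro i j
    by_cases hi : i = a <;> by_cases hj : j = b <;> simp [updEntry, hi, hj]
  simp only [hentry, ite_mul, zero_mul, sum_ite_irrel, sum_ite_eq', mem_univ, ↓reduceIte,
    sum_const_zero, mul_ite, mul_zero]
  ring

theorem grad_attention_layer_at_zero_general {N T d : ℕ} {Ω : Type} [Fintype Ω]
    (p : Ω → ℝ)
    -- sequences X = [x_1, ..., x_T] and labels y
    (X : Ω → Fin T → Fin d → ℝ) (Y : Ω → Fin N)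
    (Φ₂ : Fin d → Fin d → ℝ) (wU : Fin N → Fin d → ℝ)
    -- the last token x_T
    (τ : Fin T)
    -- logits ξ(X)_k = ∑_t (w_U(k)^⊤ Φ₂ x_t) σ(X^⊤ W x_T)_t
    (ξ : (Fin d → Fin d → ℝ) → Ω → Fin N → ℝ)
    (hξ : ∀ W ω k, ξ W ω k = ∑ t,
      (∑ i, wU k i * ∑ j, Φ₂ i j * X ω t j) *
        softmax (fun t' => ∑ i, X ω t' i * ∑ j, W i j * X ω τ j) t)
    (L : (Fin d → Fin d → ℝ) → ℝ)
    (hL : ∀ W, L W = ∑ ω, p ω * crossEntropy (Y ω) (ξ W ω))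
    -- p̂(k|X) with uniform attention weights
    (phat : Ω → Fin N → ℝ)
    (hphat : ∀ ω k, phat ω k =
      softmax (fun k' => (1 / (T : ℝ)) * ∑ t, ∑ i, wU k' i * ∑ j, Φ₂ i j * X ω t j) k) :
    ∀ a b, HasDerivAt (fun s : ℝ => L (updEntry (0 : Fin d → Fin d → ℝ) a b s))
      (∑ k, ∑ ω, p ω * (phat ω k - if Y ω = k then 1 else 0) *
        ((1 / (T : ℝ)) * ∑ t, (∑ i, wU k i * ∑ j, Φ₂ i j * X ω t j) *
          ((X ω t a - (1 / (T : ℝ)) * ∑ s, X ω s a) * X ω τ b))) 0 := by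
  intro a b
  set A : Ω → Fin N → Fin T → ℝ := fun ω k t => ∑ i, wU k i * ∑ j, Φ₂ i j * X ω t j
  set c : Ω → Fin T → ℝ := fun ω t => X ω t a * X ω τ b
  have hLs : (fun s => L (updEntry 0 a b s)) = fun s => ∑ ω, p ω *
      crossEntropy (Y ω) (fun k => ∑ t, A ω k t * softmax (fun t' => s * c ω t') t) := by
    funext s
    refine (hL _).trans (sum_congr rfl fun ω _ => ?_)
    congr 2
    funext k
    simp only [hξ, sum_mul_sum_updEntry_zero]
    rfl
  rw [hLs]
  refine (HasDerivAt.fun_sum fun ω _ => ((HasDerivAt.crossEntropy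
    (fun k => hasDerivAt_sum_mul_softmax_mul (A ω k) (c ω)) (Y ω)).const_mul (p ω))).congr_deriv ?_
  have hcentered : ∀ ω t, c ω t - 1 / T * ∑ t', c ω t' =
      (X ω t a - 1 / T * ∑ s, X ω s a) * X ω τ b := fun ω t => by
    simp only [c, ← sum_mul]
    ring
  rw [sum_comm]
  refine sum_congr rfl fun ω _ => ?_
  rw [mul_sum]
  refine sum_congr rfl fun k _ => ?_
  simp only [sum_mul_softmax_zero_mul, hcentered, hphat]
  ring

/-- for the attention loss `L(W) = E[ℓ(y, W_U Φ₂ X σ(X^⊤ W x_T))]`, the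
gradient at `W = 0` (stated entrywise) equals
`∑_k E[(p̂(k|X) - 1{y=k}) · (1/T) ∑_t w_U(k)^⊤ Φ₂ x_t · (x_t - x̄_{1:T}) x_T^⊤]`,
where `p̂(k|X)` is evaluated with uniform attention weights. -/
theorem grad_attention_layer_at_zero {N T d : ℕ} (hT : 0 < T) {Ω : Type} [Fintype Ω]
    (p : Ω → ℝ) (hp0 : ∀ ω, 0 ≤ p ω) (hp1 : ∑ ω, p ω = 1)
    -- sequences X = [x_1, ..., x_T] and labels y
    (X : Ω → Fin T → Fin d → ℝ) (Y : Ω → Fin N)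
    (Φ₂ : Fin d → Fin d → ℝ) (wU : Fin N → Fin d → ℝ)
    -- the last token x_T
    (τ : Fin T) (hτ : (τ : ℕ) = T - 1)
    -- logits ξ(X)_k = ∑_t (w_U(k)^⊤ Φ₂ x_t) σ(X^⊤ W x_T)_t
    (ξ : (Fin d → Fin d → ℝ) → Ω → Fin N → ℝ)
    (hξ : ∀ W ω k, ξ W ω k = ∑ t,
      (∑ i, wU k i * ∑ j, Φ₂ i j * X ω t j) *
        softmax (fun t' => ∑ i, X ω t' i * ∑ j, W i j * X ω τ j) t)
    (L : (Fin d → Fin d → ℝ) → ℝ)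
    (hL : ∀ W, L W = ∑ ω, p ω * crossEntropy (Y ω) (ξ W ω))
    -- p̂(k|X) with uniform attention weights
    (phat : Ω → Fin N → ℝ)
    (hphat : ∀ ω k, phat ω k =
      softmax (fun k' => (1 / (T : ℝ)) * ∑ t, ∑ i, wU k' i * ∑ j, Φ₂ i j * X ω t j) k) :
    ∀ a b, HasDerivAt (fun s : ℝ => L (updEntry (0 : Fin d → Fin d → ℝ) a b s))
      (∑ k, ∑ ω, p ω * (phat ω k - if Y ω = k then 1 else 0) *
        ((1 / (T : ℝ)) * ∑ t, (∑ i, wU k i * ∑ j, Φ₂ i j * X ω t j) *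
          ((X ω t a - (1 / (T : ℝ)) * ∑ s, X ω s a) * X ω τ b))) 0 :=
  grad_attention_layer_at_zero_general p X Y Φ₂ wU τ ξ hξ L hL phat hphat
end

section
/- Let W = (d/(2d')) U V with U = U₀ + ∑_i y_i (V₀ x_i)^⊤ and V = V₀ + ∑_i (U₀^⊤ y_i) x_i^⊤, where U₀ ∈ ℝ^{d×d'}, V₀ ∈ ℝ^{d'×d} have i.i.d. N(0,1/d) entries, and (x_i), (y_i) are orthonormal families. Assume the rescaled vectors x̃_i = √(d/d') V₀ x_i and ỹ_i = √(d/d') U₀^⊤ y_i are ε-nearly orthonormal and that |ỹ_k^⊤ x̃_l| ≤ ε for all k,l. Then |y_k^⊤ W x_l - 1{k=l}| ≤ C·n·ε for all k,l, where n is the number of stored pairs and C an absolute constant; i.e., the factorized matrix W implements the same associative memory as W_* = ∑_i y_i x_i^⊤. -/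
/-!
Exact orthonormality of `(x_i)` and `(y_i)` collapses the rank-`n` corrections of `U` and `V`:
`y_kᵀ U = U₀ᵀ y_k + V₀ x_k` and `V x_l = V₀ x_l + U₀ᵀ y_l`. Hence
`y_kᵀ W x_l = ½ (ỹ_k + x̃_k)ᵀ (x̃_l + ỹ_l)`, a sum of four inner products of which `ỹ_kᵀ ỹ_l` and
`x̃_kᵀ x̃_l` are `ε`-close to `δ_kl` and the two cross terms are `ε`-small, so the error is at most
`2ε ≤ 2nε`.
-/

open Finset

open Matrix

section Readout

variable {R ι m r : Type*} [CommSemiring R] [Fintype ι] [DecidableEq ι] [Fintype m]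

theorem vecMul_add_sum_vecMulVec_of_orthonormal {y : ι → m → R}
    (hy : ∀ i i', y i ⬝ᵥ y i' = if i = i' then 1 else 0) (A : Matrix m r R) (p : ι → r → R)
    (k : ι) : y k ᵥ* (A + ∑ i, vecMulVec (y i) (p i)) = Aᵀ *ᵥ y k + p k := by
  simp [vecMul_add, vecMul_sum, vecMul_vecMulVec, hy, mulVec_transpose]

theorem add_sum_vecMulVec_mulVec_of_orthonormal {x : ι → m → R}
    (hx : ∀ i i', x i ⬝ᵥ x i' = if i = i' then 1 else 0) (B : Matrix r m R) (q : ι → r → R)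
    (l : ι) : (B + ∑ i, vecMulVec (q i) (x i)) *ᵥ x l = B *ᵥ x l + q l := by
  simp [add_mulVec, sum_mulVec, vecMulVec_mulVec, hx]

theorem dotProduct_factorized_mulVec_of_orthonormal [Fintype r] {x y : ι → m → R}
    (hx : ∀ i i', x i ⬝ᵥ x i' = if i = i' then 1 else 0)
    (hy : ∀ i i', y i ⬝ᵥ y i' = if i = i' then 1 else 0)
    (U₀ : Matrix m r R) (V₀ : Matrix r m R) (k l : ι) :
    y k ⬝ᵥ ((U₀ + ∑ i, vecMulVec (y i) (V₀ *ᵥ x i)) *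
        (V₀ + ∑ i, vecMulVec (U₀ᵀ *ᵥ y i) (x i))) *ᵥ x l =
      (U₀ᵀ *ᵥ y k + V₀ *ᵥ x k) ⬝ᵥ (V₀ *ᵥ x l + U₀ᵀ *ᵥ y l) := by
  rw [← mulVec_mulVec, dotProduct_mulVec, vecMul_add_sum_vecMulVec_of_orthonormal hy,
    add_sum_vecMulVec_mulVec_of_orthonormal hx]

end Readout

theorem abs_dotProduct_add_div_two_sub_le {r : Type*} [Fintype r] {u v u' v' : r → ℝ}
    {δ ε : ℝ} (huv' : |u ⬝ᵥ v'| ≤ ε) (hu'v : |u' ⬝ᵥ v| ≤ ε) (huu' : |u ⬝ᵥ u' - δ| ≤ ε)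
    (hvv' : |v ⬝ᵥ v' - δ| ≤ ε) : |(u + v) ⬝ᵥ (v' + u') / 2 - δ| ≤ 2 * ε := by
  have hexpand : (u + v) ⬝ᵥ (v' + u') = u ⬝ᵥ v' + u' ⬝ᵥ v + u ⬝ᵥ u' + v ⬝ᵥ v' := by
    simp only [add_dotProduct, dotProduct_add, dotProduct_comm v u']
    ring
  rw [hexpand, abs_le] at *
  constructor <;> linarith

/-- the factorized matrix `W = (d/(2d')) U V`, with
`U = U₀ + ∑_i y_i (V₀ x_i)^⊤` and `V = V₀ + ∑_i (U₀^⊤ y_i) x_i^⊤`, implements the same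
associative memory as `W_* = ∑_i y_i x_i^⊤`: under the stated near-orthonormality
assumptions on the rescaled vectors `x̃_i = √(d/d') V₀ x_i` and `ỹ_i = √(d/d') U₀^⊤ y_i`,
`|y_k^⊤ W x_l - 1{k=l}| ≤ C·n·ε` for all `k, l`, with `C` an absolute constant. -/
theorem factorized_assoc_memory :
    ∃ C : ℝ, 0 < C ∧
      ∀ (d d' n : ℕ), 0 < d → 0 < d' →
      ∀ (x y : Fin n → Fin d → ℝ) (U0 : Fin d → Fin d' → ℝ) (V0 : Fin d' → Fin d → ℝ)
        (ε : ℝ), 0 ≤ ε →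
        -- (x_i) and (y_i) are orthonormal families
        (∀ i i', dot (x i) (x i') = if i = i' then 1 else 0) →
        (∀ i i', dot (y i) (y i') = if i = i' then 1 else 0) →
        ∀ (xt yt : Fin n → Fin d' → ℝ),
        -- x̃_i = √(d/d') V₀ x_i and ỹ_i = √(d/d') U₀^⊤ y_i
        (∀ i c, xt i c = Real.sqrt ((d : ℝ) / d') * ∑ b, V0 c b * x i b) →
        (∀ i c, yt i c = Real.sqrt ((d : ℝ) / d') * ∑ a, U0 a c * y i a) →
        -- the rescaled vectors are ε-nearly orthonormal, with ε-small cross terms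
        (∀ i i', |(∑ c, xt i c * xt i' c) - if i = i' then 1 else 0| ≤ ε) →
        (∀ i i', |(∑ c, yt i c * yt i' c) - if i = i' then 1 else 0| ≤ ε) →
        (∀ k l, |∑ c, yt k c * xt l c| ≤ ε) →
        ∀ (U : Fin d → Fin d' → ℝ) (V : Fin d' → Fin d → ℝ) (W : Fin d → Fin d → ℝ),
        (∀ a c, U a c = U0 a c + ∑ i, y i a * ∑ b, V0 c b * x i b) →
        (∀ c b, V c b = V0 c b + ∑ i, (∑ a, U0 a c * y i a) * x i b) →
        (∀ a b, W a b = ((d : ℝ) / (2 * d')) * ∑ c, U a c * V c b) →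
        ∀ k l, |(∑ a, y k a * ∑ b, W a b * x l b) - if k = l then 1 else 0|
          ≤ C * n * ε := by
  refine ⟨2, two_pos, ?_⟩
  intro d d' n _ _ x y U0 V0 ε hε hx hy xt yt hxt hyt hxx hyy hcross U V W hU hV hW k l
  set s := Real.sqrt ((d : ℝ) / d')
  have hxt' : ∀ i, xt i = s • (Matrix.of V0 *ᵥ x i) := fun i => funext (hxt i)
  have hyt' : ∀ i, yt i = s • ((Matrix.of U0)ᵀ *ᵥ y i) := fun i => funext (hyt i)
  have hU' : Matrix.of U = Matrix.of U0 + ∑ i, vecMulVec (y i) (Matrix.of V0 *ᵥ x i) := by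
    ext a c; simp [hU, vecMulVec, mulVec, dotProduct, Matrix.sum_apply]
  have hV' : Matrix.of V = Matrix.of V0 + ∑ i, vecMulVec ((Matrix.of U0)ᵀ *ᵥ y i) (x i) := by
    ext a c; simp [hV, vecMulVec, mulVec, dotProduct, Matrix.sum_apply]
  have hW' : Matrix.of W = ((d : ℝ) / (2 * d')) • (Matrix.of U * Matrix.of V) := by
    ext a b; simp [hW, Matrix.mul_apply]
  have hreadout : ∑ a, y k a * ∑ b, W a b * x l b = (yt k + xt k) ⬝ᵥ (xt l + yt l) / 2 := by
    change y k ⬝ᵥ (Matrix.of W *ᵥ x l) = _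
    have hs : s * s = (d : ℝ) / d' := Real.mul_self_sqrt (by positivity)
    rw [hW', smul_mulVec, dotProduct_smul, hU', hV',
      dotProduct_factorized_mulVec_of_orthonormal hx hy, hxt', hxt', hyt', hyt', ← smul_add,
      ← smul_add, smul_dotProduct, dotProduct_smul]
    simp only [smul_eq_mul]
    rw [div_mul_eq_div_div_swap, ← hs]
    ring
  have hn : (1 : ℝ) ≤ n := Nat.one_le_cast.mpr k.pos
  rw [hreadout]
  calc _ ≤ 2 * ε := abs_dotProduct_add_div_two_sub_le (hcross k l) (hcross l k) (hyy k l) (hxx k l)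
    _ ≤ 2 * n * ε := mul_le_mul_of_nonneg_right (le_mul_of_one_le_right two_pos.le hn) hε
end

section
/- In the single-trigger data model, after one population gradient step from W = 0 on the bag-of-words loss (uniform attention), W_O² = (η/(NT)) ∑_{k=1}^N w_U(k)(W_V²(w_E(k) - w̄_E))^⊤ + (ητ/(NT)) ∑_{k=1}^N w_U(k)(W_V² Φ₁(w_E(k) - w̄_E))^⊤, where τ = E[∑_{t=t_o}^T 1/t] and w̄_E = (1/N)∑_k w_E(k). If the embeddings and their images under W_V² and W_V²Φ₁ form an exactly orthonormal system across the relevant families, then w_U(k)^⊤ W_O² W_V² w_E(j) = (η/(NT))(1{k=j} - 1/N). -/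
/-!
Write `μ_k = E[x|y=k] - E[x]`. Centering a family commutes with any matrix, so
`μ_k = (1/T)(A_k - Ā) + (τ/T)(B_k - B̄)` and `W_O² = (η/N) ∑_k w_U(k) μ_kᵀ`, which is the first
formula. Pairing `W_O² A_j` with `w_U(k)`, orthonormality of the `w_U` isolates `⟨μ_k, A_j⟩`;
orthonormality of the `A`s gives `⟨A_k - Ā, A_j⟩ = 1{k=j} - 1/N`, and `B ⟂ A` kills the second term.
-/

open Finset Matrix

section FamilyMean

variable {ι m n R : Type*} [Fintype ι] [Field R]

noncomputable def familyMean (v : ι → n → R) : n → R := (Fintype.card ι : R)⁻¹ • ∑ k, v k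

lemma sub_familyMean_apply (v : ι → n → R) (k : ι) (a : n) :
    (v k - familyMean v) a = v k a - (Fintype.card ι : R)⁻¹ * ∑ k', v k' a := by
  simp only [familyMean, Pi.sub_apply, Pi.smul_apply, Finset.sum_apply, smul_eq_mul]

variable [Fintype n]

lemma mulVec_sub_familyMean (M : Matrix m n R) (v : ι → n → R) (k : ι) :
    M *ᵥ (v k - familyMean v) = M *ᵥ v k - familyMean (fun k' => M *ᵥ v k') := by
  simp only [familyMean, mulVec_sub, mulVec_smul, mulVec_sum]

lemma familyMean_dotProduct (v : ι → n → R) (x : n → R) :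
    familyMean v ⬝ᵥ x = (Fintype.card ι : R)⁻¹ * ∑ k, v k ⬝ᵥ x := by
  simp only [familyMean, smul_dotProduct, sum_dotProduct, smul_eq_mul]

lemma sub_familyMean_dotProduct_of_orthogonal {v : ι → n → R} {x : n → R}
    (hv : ∀ k, v k ⬝ᵥ x = 0) (k : ι) : (v k - familyMean v) ⬝ᵥ x = 0 := by
  simp [sub_dotProduct, familyMean_dotProduct, hv]

variable [DecidableEq ι]

lemma sub_familyMean_dotProduct_of_orthonormal {v : ι → n → R}
    (hv : ∀ k j, v k ⬝ᵥ v j = if k = j then 1 else 0) (k j : ι) :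
    (v k - familyMean v) ⬝ᵥ v j = (if k = j then 1 else 0) - (Fintype.card ι : R)⁻¹ := by
  simp [sub_dotProduct, familyMean_dotProduct, hv]

end FamilyMean

lemma dot_eq_dotProduct {d : ℕ} (u v : Fin d → ℝ) : dot u v = u ⬝ᵥ v := rfl

lemma dotProduct_sum_vecMulVec_mulVec {ι m n R : Type*} [Fintype ι] [DecidableEq ι] [Fintype m]
    [Fintype n] [CommRing R] {u : ι → m → R} (μ : ι → n → R) (k : ι)
    (hu : ∀ j, u k ⬝ᵥ u j = if k = j then 1 else 0) (x : n → R) :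
    u k ⬝ᵥ ((∑ j, vecMulVec (u j) (μ j)) *ᵥ x) = μ k ⬝ᵥ x := by
  simp [sum_mulVec, vecMulVec_mulVec, dotProduct_sum, dotProduct_smul, hu]

theorem one_step_WO2_general {N T d : ℕ} (η τ : ℝ)
    (wE wU : Fin N → Fin d → ℝ) (WV2 Φ₁ : Fin d → Fin d → ℝ)
    -- A k = W_V² w_E(k) and B k = W_V² Φ₁ w_E(k)
    (A B : Fin N → Fin d → ℝ)
    (hA : ∀ k a, A k a = ∑ b, WV2 a b * wE k b)
    (hB : ∀ k a, B k a = ∑ b, (∑ c, WV2 a c * Φ₁ c b) * wE k b)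
    -- E[x|y=k] - E[x] = (1/T) W_V²(w_E(k)-w̄_E) + (τ/T) W_V²Φ₁(w_E(k)-w̄_E)
    (μdiff : Fin N → Fin d → ℝ)
    (hμdiff : ∀ k a, μdiff k a =
      (1 / (T : ℝ)) * (∑ b, WV2 a b * (wE k b - (1 / (N : ℝ)) * ∑ k', wE k' b)) +
      (τ / (T : ℝ)) *
        (∑ b, (∑ c, WV2 a c * Φ₁ c b) * (wE k b - (1 / (N : ℝ)) * ∑ k', wE k' b)))
    -- W_O² after one gradient step: (η/N) ∑_k w_U(k) (E[x|y=k] - E[x])^⊤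
    (WO2 : Fin d → Fin d → ℝ)
    (hWO2 : ∀ a b, WO2 a b = (η / N) * ∑ k, wU k a * μdiff k b)
    -- the families w_U, A, B jointly form an exactly orthonormal system
    (horth : ∀ i j : Fin N ⊕ (Fin N ⊕ Fin N),
      dot (Sum.elim wU (Sum.elim A B) i) (Sum.elim wU (Sum.elim A B) j) =
        if i = j then 1 else 0) :
    (∀ a b, WO2 a b =
      (η / ((N : ℝ) * T)) * ∑ k, wU k a * (A k b - (1 / (N : ℝ)) * ∑ k', A k' b) +
      (η * τ / ((N : ℝ) * T)) * ∑ k, wU k a * (B k b - (1 / (N : ℝ)) * ∑ k', B k' b)) ∧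
    (∀ k j : Fin N,
      dot (wU k) (fun a => ∑ b, WO2 a b * A j b) =
        (η / ((N : ℝ) * T)) * ((if k = j then 1 else 0) - 1 / N)) := by
  have hAmul : A = fun k => of WV2 *ᵥ wE k := funext fun k => funext (hA k)
  have hBmul : B = fun k => (of WV2 * of Φ₁) *ᵥ wE k := funext fun k => funext (hB k)
  have hAmean : ∀ k, A k - familyMean A = of WV2 *ᵥ (wE k - familyMean wE) := by
    simp only [hAmul, mulVec_sub_familyMean, implies_true]
  have hBmean : ∀ k, B k - familyMean B = (of WV2 * of Φ₁) *ᵥ (wE k - familyMean wE) := by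
    simp only [hBmul, mulVec_sub_familyMean, implies_true]
  have hμ : ∀ k, μdiff k = (1 / (T : ℝ)) • (A k - familyMean A) + (τ / T) • (B k - familyMean B) := by
    intro k
    ext a
    simp only [hμdiff, hAmean, hBmean, Pi.add_apply, Pi.smul_apply, smul_eq_mul, mulVec,
      dotProduct, of_apply, mul_apply, sub_familyMean_apply, Fintype.card_fin, one_div]
  have hW : WO2 = (η / N) • ∑ k, vecMulVec (wU k) (μdiff k) := by
    ext a b
    simp [hWO2, Matrix.sum_apply, vecMulVec_apply]
  refine ⟨fun a b => ?_, fun k j => ?_⟩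
  · simp only [hWO2, hμ, Pi.add_apply, Pi.smul_apply, smul_eq_mul, sub_familyMean_apply,
      Fintype.card_fin, one_div, mul_sum, ← sum_add_distrib]
    refine sum_congr rfl fun k _ => ?_
    ring
  · have hUU : ∀ j, wU k ⬝ᵥ wU j = if k = j then 1 else 0 := fun j => by
      simpa [dot_eq_dotProduct] using horth (.inl k) (.inl j)
    have hAA : ∀ i j, A i ⬝ᵥ A j = if i = j then 1 else 0 := fun i j => by
      simpa [dot_eq_dotProduct] using horth (.inr (.inl i)) (.inr (.inl j))
    have hBA : ∀ i, B i ⬝ᵥ A j = 0 := fun i => by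
      simpa [dot_eq_dotProduct] using horth (.inr (.inr i)) (.inr (.inl j))
    change wU k ⬝ᵥ (WO2 *ᵥ A j) = _
    rw [hW, smul_mulVec, dotProduct_smul, dotProduct_sum_vecMulVec_mulVec _ _ hUU, hμ,
      add_dotProduct, smul_dotProduct, smul_dotProduct,
      sub_familyMean_dotProduct_of_orthonormal hAA, sub_familyMean_dotProduct_of_orthogonal hBA]
    simp only [Fintype.card_fin, smul_eq_mul]
    ring

/-- in the single-trigger model, one population gradient step from `W = 0`
on the bag-of-words loss gives
`W_O² = (η/(NT)) ∑_k w_U(k)(W_V²(w_E(k) - w̄_E))^⊤ + (ητ/(NT)) ∑_k w_U(k)(W_V²Φ₁(w_E(k) - w̄_E))^⊤`,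
and if the relevant families are exactly orthonormal then
`w_U(k)^⊤ W_O² W_V² w_E(j) = (η/(NT))(1{k=j} - 1/N)`. -/
theorem one_step_WO2 {N T d : ℕ} (hN : 0 < N) (hT : 0 < T) (η τ : ℝ)
    (wE wU : Fin N → Fin d → ℝ) (WV2 Φ₁ : Fin d → Fin d → ℝ)
    -- A k = W_V² w_E(k) and B k = W_V² Φ₁ w_E(k)
    (A B : Fin N → Fin d → ℝ)
    (hA : ∀ k a, A k a = ∑ b, WV2 a b * wE k b)
    (hB : ∀ k a, B k a = ∑ b, (∑ c, WV2 a c * Φ₁ c b) * wE k b)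
    -- E[x|y=k] - E[x] = (1/T) W_V²(w_E(k)-w̄_E) + (τ/T) W_V²Φ₁(w_E(k)-w̄_E)
    (μdiff : Fin N → Fin d → ℝ)
    (hμdiff : ∀ k a, μdiff k a =
      (1 / (T : ℝ)) * (∑ b, WV2 a b * (wE k b - (1 / (N : ℝ)) * ∑ k', wE k' b)) +
      (τ / (T : ℝ)) *
        (∑ b, (∑ c, WV2 a c * Φ₁ c b) * (wE k b - (1 / (N : ℝ)) * ∑ k', wE k' b)))
    -- W_O² after one gradient step: (η/N) ∑_k w_U(k) (E[x|y=k] - E[x])^⊤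
    (WO2 : Fin d → Fin d → ℝ)
    (hWO2 : ∀ a b, WO2 a b = (η / N) * ∑ k, wU k a * μdiff k b)
    -- the families w_U, A, B jointly form an exactly orthonormal system
    (horth : ∀ i j : Fin N ⊕ (Fin N ⊕ Fin N),
      dot (Sum.elim wU (Sum.elim A B) i) (Sum.elim wU (Sum.elim A B) j) =
        if i = j then 1 else 0) :
    (∀ a b, WO2 a b =
      (η / ((N : ℝ) * T)) * ∑ k, wU k a * (A k b - (1 / (N : ℝ)) * ∑ k', A k' b) +
      (η * τ / ((N : ℝ) * T)) * ∑ k, wU k a * (B k b - (1 / (N : ℝ)) * ∑ k', B k' b)) ∧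
    (∀ k j : Fin N,
      dot (wU k) (fun a => ∑ b, WO2 a b * A j b) =
        (η / ((N : ℝ) * T)) * ((if k = j then 1 else 0) - 1 / N)) :=
  one_step_WO2_general η τ wE wU WV2 Φ₁ A B hA hB μdiff hμdiff WO2 hWO2 horth
end
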